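/- arXiv:2304.04312 — 2 statements merged into one kernel-verified Lean document; each statement's English description precedes it below -/
import Mathlib

section
/- For every real number a > 0, setting t = (-1 + sqrt(1 + a²))/a, one has a·t + ln(2t/a) ≥ a² / (2(sqrt(1 + a²) + 1)). -/
theorem at_add_log_ge (a : ℝ) (ha : 0 < a) :
    a * ((-1 + Real.sqrt (1 + a ^ 2)) / a) +
      Real.log (2 * ((-1 + Real.sqrt (1 + a ^ 2)) / a) / a) ≥
    a ^ 2 / (2 * (Real.sqrt (1 + a ^ 2) + 1)) := by
  set s := Real.sqrt (1 + a ^ 2) with hsdef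
  have hs2 : s ^ 2 = 1 + a ^ 2 := Real.sq_sqrt (by positivity)
  have hs1 : 1 ≤ s := by
    nlinarith [Real.sqrt_nonneg (1 + a ^ 2)]
  have ha' : a ≠ 0 := ne_of_gt ha
  have h1 : a * ((-1 + s) / a) = s - 1 := by field_simp; ring
  have h2 : 2 * ((-1 + s) / a) / a = 2 / (s + 1) := by
    rw [div_eq_div_iff (by positivity) (by linarith)]
    field_simp
    nlinarith
  have h3 : a ^ 2 / (2 * (s + 1)) = (s - 1) / 2 := by
    rw [div_eq_div_iff (by positivity) (by norm_num)]
    nlinarith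
  rw [h1, h2, h3]
  have hx : (0:ℝ) < (s + 1) / 2 := by linarith
  have hlog := Real.log_le_sub_one_of_pos hx
  have : Real.log (2 / (s + 1)) = - Real.log ((s + 1) / 2) := by
    rw [← Real.log_inv]; congr 1; field_simp
  rw [this]
  linarith
end

section
/- Let U be a chi-square random variable with D degrees of freedom. Then for every x > 0, P(U - D ≥ 2√(D x) + 2x) ≤ exp(-x) and P(D - U ≥ 2√(D x)) ≤ exp(-x). -/
open MeasureTheory ProbabilityTheory Real
open scoped NNReal

/-! For `t < 1/2` the moment generating function of a squared standard Gaussian is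
`(1 - 2t)^(-1/2)`, so by independence the cumulant generating function of `U = ∑ Zᵢ²` is
`-D log (1 - 2t) / 2`, and Chernoff's bound gives `P(U ≥ ε) ≤ exp (-tε - D log (1 - 2t) / 2)`
for `t ≥ 0`, and the same bound for `P(U ≤ ε)` when `t ≤ 0`.
With `s = √(x/D)`, so that `x = D s²` and `√(D x) = D s`, take `t = s / (1 + 2s)` for the upper
tail and `t = -s` for the lower tail: the elementary bounds `log u ≤ (u - u⁻¹) / 2` (for `u ≥ 1`)
and `y - y²/2 ≤ log (1 + y)` (for `y ≥ 0`) bring the exponent down to `-D s² = -x`. -/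

lemma le_of_hasDerivAt_le {f g f' g' : ℝ → ℝ} {a b : ℝ} (hab : a ≤ b)
    (hf : ∀ x ∈ Set.Icc a b, HasDerivAt f (f' x) x) (hg : ∀ x ∈ Set.Icc a b, HasDerivAt g (g' x) x)
    (hfg : ∀ x ∈ Set.Ico a b, f' x ≤ g' x) (ha : f a ≤ g a) : f b ≤ g b :=
  image_le_of_deriv_right_le_deriv_boundary
    (fun x hx ↦ (hf x hx).continuousAt.continuousWithinAt)
    (fun x hx ↦ (hf x (Set.Ico_subset_Icc_self hx)).hasDerivWithinAt) ha
    (fun x hx ↦ (hg x hx).continuousAt.continuousWithinAt)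
    (fun x hx ↦ (hg x (Set.Ico_subset_Icc_self hx)).hasDerivWithinAt) hfg ⟨hab, le_rfl⟩

lemma sub_sq_div_two_le_log_one_add {y : ℝ} (hy : 0 ≤ y) : y - y ^ 2 / 2 ≤ log (1 + y) := by
  refine le_of_hasDerivAt_le (f := fun x ↦ x - x ^ 2 / 2) (g := fun x ↦ log (1 + x))
    (f' := fun x ↦ 1 - x) (g' := fun x ↦ (1 + x)⁻¹) hy
    (fun x _ ↦ ?_) (fun x hx ↦ ?_) (fun x hx ↦ ?_) (by simp)
  · simpa using ((hasDerivAt_id' x).fun_sub ((hasDerivAt_pow 2 x).div_const 2))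
  · simpa using ((hasDerivAt_id' x).const_add 1).log (by linarith [hx.1])
  · have : 0 < 1 + x := by linarith [hx.1]
    rw [← one_div, le_div_iff₀ this]
    nlinarith [sq_nonneg x]

lemma log_le_sub_inv_div_two {u : ℝ} (hu : 1 ≤ u) : log u ≤ (u - u⁻¹) / 2 := by
  refine le_of_hasDerivAt_le (f := log) (g := fun x ↦ (x - x⁻¹) / 2)
    (f' := fun x ↦ x⁻¹) (g' := fun x ↦ (1 + (x ^ 2)⁻¹) / 2) hu
    (fun x hx ↦ hasDerivAt_log (by linarith [hx.1])) (fun x hx ↦ ?_) (fun x hx ↦ ?_) (by simp)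
  · simpa [sub_eq_add_neg] using
      ((hasDerivAt_id x).sub (hasDerivAt_inv (by linarith [hx.1]))).div_const 2
  · have : 0 < x := by linarith [hx.1]
    field_simp
    nlinarith [sq_nonneg (x - 1)]

lemma chernoff_exponent_upper_le {d s : ℝ} (hd : 0 ≤ d) (hs : 0 ≤ s) :
    -(s / (1 + 2 * s)) * (d + 2 * (d * s) + 2 * (d * s ^ 2)) -
      d * log (1 - 2 * (s / (1 + 2 * s))) / 2 ≤ -(d * s ^ 2) := by
  have h₀ : 0 < 1 + 2 * s := by linarith
  have hlog := log_le_sub_inv_div_two (u := 1 + 2 * s) (by linarith)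
  rw [show 1 - 2 * (s / (1 + 2 * s)) = (1 + 2 * s)⁻¹ by field_simp; ring, log_inv]
  have key : -(s / (1 + 2 * s)) * (d + 2 * (d * s) + 2 * (d * s ^ 2)) +
      d * ((1 + 2 * s - (1 + 2 * s)⁻¹) / 2) / 2 = -(d * s ^ 2) := by
    field_simp
    ring
  nlinarith [mul_le_mul_of_nonneg_left hlog hd]

lemma chernoff_exponent_lower_le {d s : ℝ} (hd : 0 ≤ d) (hs : 0 ≤ s) :
    -(-s) * (d - 2 * (d * s)) - d * log (1 - 2 * -s) / 2 ≤ -(d * s ^ 2) := by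
  have hlog := sub_sq_div_two_le_log_one_add (y := 2 * s) (by positivity)
  rw [show 1 - 2 * -s = 1 + 2 * s by ring]
  nlinarith [mul_le_mul_of_nonneg_left hlog hd]

lemma gaussianPDFReal_zero_mul_exp_mul_sq {v : ℝ≥0} (hv : v ≠ 0) (t y : ℝ) :
    gaussianPDFReal 0 v y * exp (t * y ^ 2) =
      (√(2 * π * v))⁻¹ * exp (-((2 * (v : ℝ))⁻¹ - t) * y ^ 2) := by
  have : (v : ℝ) ≠ 0 := by exact_mod_cast hv
  rw [gaussianPDFReal, mul_assoc, ← exp_add]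
  congr 2
  field_simp
  ring

lemma integrable_exp_mul_sq_gaussianReal {v : ℝ≥0} (hv : v ≠ 0) {t : ℝ} (ht : 2 * v * t < 1) :
    Integrable (fun y ↦ exp (t * y ^ 2)) (gaussianReal 0 v) := by
  have hb : 0 < (2 * (v : ℝ))⁻¹ - t := by
    have hv' : (0 : ℝ) < v := by positivity
    rw [show (2 * (v : ℝ))⁻¹ - t = (1 - 2 * v * t) / (2 * v) by field_simp]
    exact div_pos (by linarith) (by positivity)
  rw [gaussianReal_of_var_ne_zero 0 hv, gaussianPDF_def,
    integrable_withDensity_iff_integrable_smul' (by fun_prop) (by simp)]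
  simp_rw [ENNReal.toReal_ofReal (gaussianPDFReal_nonneg _ _ _), smul_eq_mul,
    gaussianPDFReal_zero_mul_exp_mul_sq hv]
  exact (integrable_exp_neg_mul_sq hb).const_mul _

lemma integral_exp_mul_sq_gaussianReal {v : ℝ≥0} (hv : v ≠ 0) {t : ℝ} (ht : 2 * v * t < 1) :
    ∫ y, exp (t * y ^ 2) ∂gaussianReal 0 v = (√(1 - 2 * v * t))⁻¹ := by
  have hv' : (0 : ℝ) < v := by positivity
  have h1 : 0 < 1 - 2 * v * t := by linarith
  simp_rw [integral_gaussianReal_eq_integral_smul hv, smul_eq_mul,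
    gaussianPDFReal_zero_mul_exp_mul_sq hv, integral_const_mul, integral_gaussian]
  rw [show π / ((2 * (v : ℝ))⁻¹ - t) = 2 * π * v / (1 - 2 * v * t) by field_simp, sqrt_div' _ h1.le]
  field_simp

section GaussianSquare

variable {Ω : Type*} [MeasurableSpace Ω] {p : Measure Ω} {X : Ω → ℝ} {v : ℝ≥0} {t : ℝ}

lemma mgf_sq_of_map_eq_gaussianReal (hX : p.map X = gaussianReal 0 v) (hv : v ≠ 0)
    (ht : 2 * v * t < 1) : mgf (fun ω ↦ X ω ^ 2) p t = (√(1 - 2 * v * t))⁻¹ := by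
  have hXm : AEMeasurable X p := .of_map_ne_zero (by rw [hX]; exact IsProbabilityMeasure.ne_zero _)
  rw [← integral_exp_mul_sq_gaussianReal hv ht, ← hX, integral_map hXm (by fun_prop)]
  rfl

lemma cgf_sq_of_map_eq_gaussianReal (hX : p.map X = gaussianReal 0 v) (hv : v ≠ 0)
    (ht : 2 * v * t < 1) : cgf (fun ω ↦ X ω ^ 2) p t = -log (1 - 2 * v * t) / 2 := by
  rw [cgf, mgf_sq_of_map_eq_gaussianReal hX hv ht, log_inv, log_sqrt (by linarith)]
  ring

end GaussianSquare

section ChiSquare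

variable {ι Ω : Type*} [Fintype ι] [MeasurableSpace Ω] {μ : Measure Ω} {Z : ι → Ω → ℝ} {t : ℝ}

lemma mgf_sum_sq (hindep : iIndepFun Z μ) (hlaw : ∀ i, μ.map (Z i) = gaussianReal 0 1)
    (ht : t < 1 / 2) :
    mgf (fun ω ↦ ∑ i, Z i ω ^ 2) μ t = (√(1 - 2 * t))⁻¹ ^ Fintype.card ι := by
  have hZm (i : ι) : AEMeasurable (Z i) μ :=
    .of_map_ne_zero (by rw [hlaw i]; exact IsProbabilityMeasure.ne_zero _)
  have hsq := hindep.comp (fun _ y ↦ y ^ 2) fun _ ↦ by fun_prop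
  have := hsq.mgf_sum₀ (fun i ↦ (hZm i).pow_const 2) (t := t) Finset.univ
  rw [Finset.sum_fn] at this
  simp only [Function.comp_def] at this
  have h1 : 2 * ((1 : ℝ≥0) : ℝ) * t < 1 := by push_cast; linarith
  simp only [this, mgf_sq_of_map_eq_gaussianReal (hlaw _) one_ne_zero h1, NNReal.coe_one,
    mul_one, Finset.prod_const, Finset.card_univ]

lemma integrable_exp_mul_sum_sq (hindep : iIndepFun Z μ)
    (hlaw : ∀ i, μ.map (Z i) = gaussianReal 0 1) (ht : t < 1 / 2) :
    Integrable (fun ω ↦ exp (t * ∑ i, Z i ω ^ 2)) μ := by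
  have := hindep.isProbabilityMeasure
  rw [← mgf_pos_iff, mgf_sum_sq hindep hlaw ht]
  have : 0 < 1 - 2 * t := by linarith
  positivity

lemma cgf_sum_sq (hindep : iIndepFun Z μ) (hlaw : ∀ i, μ.map (Z i) = gaussianReal 0 1)
    (ht : t < 1 / 2) :
    cgf (fun ω ↦ ∑ i, Z i ω ^ 2) μ t = -(Fintype.card ι * log (1 - 2 * t)) / 2 := by
  rw [cgf, mgf_sum_sq hindep hlaw ht, log_pow, log_inv, log_sqrt (by linarith)]
  ring

lemma measure_sum_sq_ge_le (hindep : iIndepFun Z μ) (hlaw : ∀ i, μ.map (Z i) = gaussianReal 0 1)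
    (ht₀ : 0 ≤ t) (ht : t < 1 / 2) (ε : ℝ) :
    μ {ω | ε ≤ ∑ i, Z i ω ^ 2} ≤
      ENNReal.ofReal (exp (-t * ε - Fintype.card ι * log (1 - 2 * t) / 2)) := by
  have := hindep.isProbabilityMeasure
  rw [← ofReal_measureReal]
  refine ENNReal.ofReal_le_ofReal ((measure_ge_le_exp_cgf ε ht₀
    (integrable_exp_mul_sum_sq hindep hlaw ht)).trans_eq ?_)
  rw [cgf_sum_sq hindep hlaw ht]
  ring_nf

lemma measure_sum_sq_le_le (hindep : iIndepFun Z μ) (hlaw : ∀ i, μ.map (Z i) = gaussianReal 0 1)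
    (ht : t ≤ 0) (ε : ℝ) :
    μ {ω | ∑ i, Z i ω ^ 2 ≤ ε} ≤
      ENNReal.ofReal (exp (-t * ε - Fintype.card ι * log (1 - 2 * t) / 2)) := by
  have := hindep.isProbabilityMeasure
  have ht' : t < 1 / 2 := by linarith
  rw [← ofReal_measureReal]
  refine ENNReal.ofReal_le_ofReal ((measure_le_le_exp_cgf ε ht
    (integrable_exp_mul_sum_sq hindep hlaw ht')).trans_eq ?_)
  rw [cgf_sum_sq hindep hlaw ht']
  ring_nf

end ChiSquare

theorem chi_square_tail_general (D : ℕ) (hD : 0 < D) {Ω : Type*} [MeasurableSpace Ω]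
    (μ : Measure Ω) (Z : Fin D → Ω → ℝ)
    (hindep : iIndepFun Z μ)
    (hlaw : ∀ i, μ.map (Z i) = gaussianReal 0 1) (x : ℝ) (hx : 0 < x) :
    μ {ω | (∑ i, Z i ω ^ 2) - D ≥ 2 * Real.sqrt (D * x) + 2 * x} ≤
      ENNReal.ofReal (Real.exp (-x)) ∧
    μ {ω | (D : ℝ) - ∑ i, Z i ω ^ 2 ≥ 2 * Real.sqrt (D * x)} ≤
      ENNReal.ofReal (Real.exp (-x)) := by
  have hD' : (0 : ℝ) < D := by exact_mod_cast hD
  set s := √(x / D)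
  have hs : 0 ≤ s := sqrt_nonneg _
  have hx_eq : x = D * s ^ 2 := by
    rw [sq_sqrt (by positivity)]
    field_simp
  have hsqrt : √(D * x) = D * s := by
    rw [hx_eq, show (D : ℝ) * (D * s ^ 2) = (D * s) ^ 2 by ring, sqrt_sq (by positivity)]
  constructor
  · have ht : s / (1 + 2 * s) < 1 / 2 := by
      rw [div_lt_iff₀ (by positivity)]
      linarith
    calc μ {ω | (∑ i, Z i ω ^ 2) - D ≥ 2 * √(D * x) + 2 * x}
        = μ {ω | D + (2 * √(D * x) + 2 * x) ≤ ∑ i, Z i ω ^ 2} := by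
          simp_rw [ge_iff_le, le_sub_iff_add_le']
      _ ≤ _ := measure_sum_sq_ge_le hindep hlaw (by positivity) ht _
      _ ≤ ENNReal.ofReal (exp (-x)) := by
          rw [Fintype.card_fin, hsqrt, hx_eq, ← add_assoc]
          exact ENNReal.ofReal_le_ofReal (exp_le_exp.2 (chernoff_exponent_upper_le hD'.le hs))
  · calc μ {ω | (D : ℝ) - ∑ i, Z i ω ^ 2 ≥ 2 * √(D * x)}
        = μ {ω | ∑ i, Z i ω ^ 2 ≤ D - 2 * √(D * x)} := by
          simp_rw [ge_iff_le, le_sub_comm]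
      _ ≤ _ := measure_sum_sq_le_le hindep hlaw (neg_nonpos.2 hs) _
      _ ≤ ENNReal.ofReal (exp (-x)) := by
          rw [Fintype.card_fin, hsqrt, hx_eq]
          exact ENNReal.ofReal_le_ofReal (exp_le_exp.2 (chernoff_exponent_lower_le hD'.le hs))

theorem chi_square_tail (D : ℕ) (hD : 0 < D) {Ω : Type*} [MeasurableSpace Ω]
    (μ : Measure Ω) [IsProbabilityMeasure μ] (Z : Fin D → Ω → ℝ)
    (hmeas : ∀ i, Measurable (Z i))
    (hindep : iIndepFun Z μ)
    (hlaw : ∀ i, μ.map (Z i) = gaussianReal 0 1) (x : ℝ) (hx : 0 < x) :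
    μ {ω | (∑ i, Z i ω ^ 2) - D ≥ 2 * Real.sqrt (D * x) + 2 * x} ≤
      ENNReal.ofReal (Real.exp (-x)) ∧
    μ {ω | (D : ℝ) - ∑ i, Z i ω ^ 2 ≥ 2 * Real.sqrt (D * x)} ≤
      ENNReal.ofReal (Real.exp (-x)) :=
  chi_square_tail_general D hD μ Z hindep hlaw x hx
end
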